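/- arXiv:1802.02850 — 3 statements merged into one kernel-verified Lean document; each statement's English description precedes it below -/
import Mathlib

section
/- (Lemma 1, part (b): the defence rule Φ* asymptotically meets the false-positive constraint.) Let A be a nonempty finite set, n ≥ 1, d_n : A^n × A^n → ℝ nonnegative and permutation-invariant with d_n(y,y) = 0 for all y, P_0 a strictly positive PMF on A, Δ_0 ≥ 0 and λ > 0. Define Φ*(y) = exp( −n · max{ λ − min_{x ∈ A^n : d_n(x,y) ≤ nΔ_0} D(P̂_x ‖ P_0), 0 } ). Then for every channel A ∈ C_{Δ_0}, P_FP(Φ*, A) ≤ (n+1)^{(|A|² + 2|A|)·(|A|−1) + |A|} · e^{−nλ}. -/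
open scoped Classical
open Finset Filter

noncomputable section

/-- A probability mass function on a finite alphabet, as a real-valued function. -/
def IsPMF {A : Type} [Fintype A] (P : A → ℝ) : Prop :=
  (∀ a, 0 ≤ P a) ∧ ∑ a, P a = 1

/-- Kullback--Leibler divergence `D(Q‖P) = ∑_{a : Q a > 0} Q a · ln (Q a / P a)`. -/
def klDiv {A : Type} [Fintype A] (Q P : A → ℝ) : ℝ :=
  ∑ a, if 0 < Q a then Q a * Real.log (Q a / P a) else 0

/-- First marginal of a joint PMF on `A × A`. -/
def margX {A : Type} [Fintype A] (Q : A × A → ℝ) : A → ℝ := fun a => ∑ b, Q (a, b)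

/-- Second marginal of a joint PMF on `A × A`. -/
def margY {A : Type} [Fintype A] (Q : A × A → ℝ) : A → ℝ := fun b => ∑ a, Q (a, b)

/-- Expected distortion of a joint PMF. -/
def expDist {A : Type} [Fintype A] (d : A → A → ℝ) (Q : A × A → ℝ) : ℝ :=
  ∑ q : A × A, Q q * d q.1 q.2

/-- Generalized divergence `D̃_Δ(P_Y, P)`: minimum of `D(Q_X‖P)` over joint PMFs `Q`
with second marginal `P_Y` and expected distortion at most `Δ`. -/
def Dtilde {A : Type} [Fintype A] (d : A → A → ℝ) (Δ : ℝ) (PY P : A → ℝ) : ℝ :=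
  sInf {v | ∃ Q : A × A → ℝ,
    IsPMF Q ∧ margY Q = PY ∧ expDist d Q ≤ Δ ∧ v = klDiv (margX Q) P}

/-- Earth mover distance between two PMFs. -/
def EMD {A : Type} [Fintype A] (d : A → A → ℝ) (P P' : A → ℝ) : ℝ :=
  sInf {v | ∃ R : A × A → ℝ,
    IsPMF R ∧ margX R = P ∧ margY R = P' ∧ v = expDist d R}

/-- Memoryless (product) probability of a sequence. -/
def seqProb {A : Type} {n : ℕ} (P : A → ℝ) (x : Fin n → A) : ℝ := ∏ i, P (x i)

/-- Additive extension of a per-letter distortion to sequences. -/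
def dSeq {A : Type} {n : ℕ} (d : A → A → ℝ) (x y : Fin n → A) : ℝ := ∑ i, d (x i) (y i)

/-- Empirical PMF (type) of a sequence. -/
def empP {A : Type} [Fintype A] [DecidableEq A] {n : ℕ} (x : Fin n → A) : A → ℝ :=
  fun a => ((univ.filter fun i => x i = a).card : ℝ) / (n : ℝ)

/-- Empirical entropy of a sequence. -/
def empEnt {A : Type} [Fintype A] [DecidableEq A] {n : ℕ} (y : Fin n → A) : ℝ :=
  -∑ a, if 0 < empP y a then empP y a * Real.log (empP y a) else 0

/-- Conditional type class `T(y|x)`. -/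
def condTypeClass {A : Type} [Fintype A] [DecidableEq A] {n : ℕ} (x y : Fin n → A) :
    Finset (Fin n → A) :=
  univ.filter fun y' => ∀ a b : A,
    (univ.filter fun i => x i = a ∧ y' i = b).card
      = (univ.filter fun i => x i = a ∧ y i = b).card

/-- Number of distinct conditional type classes `T(y|x)` arising from `y` with
`dn x y ≤ n·Δ`. -/
def numCondTypes {A : Type} [Fintype A] [DecidableEq A] {n : ℕ}
    (dn : (Fin n → A) → (Fin n → A) → ℝ) (Δ : ℝ) (x : Fin n → A) : ℕ :=
  ((univ.filter fun y => dn x y ≤ (n : ℝ) * Δ).image fun y => condTypeClass x y).card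

/-- The optimal attack channel `A*_Δ(y|x) = c_n(x)/|T(y|x)|` on admissible `y`,
and `0` otherwise; here `c_n(x)` is the reciprocal of the number of admissible
conditional type classes. -/
def Astar {A : Type} [Fintype A] [DecidableEq A] {n : ℕ}
    (dn : (Fin n → A) → (Fin n → A) → ℝ) (Δ : ℝ) (x y : Fin n → A) : ℝ :=
  if dn x y ≤ (n : ℝ) * Δ then
    ((numCondTypes dn Δ x : ℝ))⁻¹ / ((condTypeClass x y).card : ℝ)
  else 0

/-- A channel on `A^n`: `W x y` is the conditional probability of output `y` given input `x`. -/
def IsChannel {A : Type} [Fintype A] {n : ℕ}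
    (W : (Fin n → A) → (Fin n → A) → ℝ) : Prop :=
  (∀ x y, 0 ≤ W x y) ∧ ∀ x, ∑ y, W x y = 1

/-- The class `C_Δ` of admissible channels: those assigning zero probability to any
`y` with `dn x y > n·Δ`. -/
def InC {A : Type} [Fintype A] {n : ℕ}
    (dn : (Fin n → A) → (Fin n → A) → ℝ) (Δ : ℝ)
    (W : (Fin n → A) → (Fin n → A) → ℝ) : Prop :=
  IsChannel W ∧ ∀ x y, (n : ℝ) * Δ < dn x y → W x y = 0

/-- False positive probability: `Φ y` is the probability of deciding `H₁` given `y`. -/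
def PFP {A : Type} [Fintype A] {n : ℕ} (P0 : A → ℝ) (Φ : (Fin n → A) → ℝ)
    (A0 : (Fin n → A) → (Fin n → A) → ℝ) : ℝ :=
  ∑ x, ∑ y, seqProb P0 x * A0 x y * Φ y

/-- False negative probability. -/
def PFN {A : Type} [Fintype A] {n : ℕ} (P1 : A → ℝ) (Φ : (Fin n → A) → ℝ)
    (A1 : (Fin n → A) → (Fin n → A) → ℝ) : ℝ :=
  ∑ x, ∑ y, seqProb P1 x * A1 x y * (1 - Φ y)

/-- Sequence-level generalized divergence
`D̃ⁿ_Δ(y,P) = min_{x : d(x,y) ≤ nΔ} D(P̂_x‖P)`. -/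
def DtildeN {A : Type} [Fintype A] [DecidableEq A] {n : ℕ} (d : A → A → ℝ) (Δ : ℝ)
    (y : Fin n → A) (P : A → ℝ) : ℝ :=
  sInf {v | ∃ x : Fin n → A, dSeq d x y ≤ (n : ℝ) * Δ ∧ v = klDiv (empP x) P}

/-!
If an admissible channel sends `x` to `y`, then `x` competes in the minimum defining `Φ*(y)`,
so `Φ*(y) ≤ e^{-n(λ - D(P̂_x‖P₀))}`. Summing over `y` removes the channel, and the identity
`P₀ⁿ(x) e^{n D(P̂_x‖P₀)} = P̂_xⁿ(x)` leaves `e^{-nλ} ∑ₓ P̂_xⁿ(x)`. Grouping the sequences by their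
type, each type contributes at most `1`, and there are at most `(n+1)^|A|` types.
-/

theorem seqProb_nonneg {A : Type} {n : ℕ} {P : A → ℝ} (hP : ∀ a, 0 ≤ P a) (x : Fin n → A) :
    0 ≤ seqProb P x :=
  prod_nonneg fun _ _ => hP _

section EmpiricalTypes

variable {A : Type} [Fintype A] {n : ℕ}

theorem sum_seqProb_eq_pow (P : A → ℝ) : ∑ x : Fin n → A, seqProb P x = (∑ a, P a) ^ n := by
  simp only [seqProb]
  rw [← Fintype.prod_sum (fun (_ : Fin n) a => P a), prod_const, card_univ, Fintype.card_fin]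

theorem sum_seqProb_le_one {P : A → ℝ} (hP : ∀ a, 0 ≤ P a) (hsum : ∑ a, P a ≤ 1) :
    ∑ x : Fin n → A, seqProb P x ≤ 1 := by
  rw [sum_seqProb_eq_pow]
  exact pow_le_one₀ (sum_nonneg fun a _ => hP a) hsum

variable [DecidableEq A]

theorem seqProb_eq_prod_pow (P : A → ℝ) (x : Fin n → A) :
    seqProb P x = ∏ a, P a ^ #{i | x i = a} := by
  rw [seqProb, ← prod_fiberwise_of_maps_to (g := x) (t := univ) (fun i _ => mem_univ (x i))]
  refine prod_congr rfl fun a _ => ?_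
  rw [prod_congr rfl fun i hi => congrArg P (mem_filter.mp hi).2, prod_const]

theorem empP_nonneg (x : Fin n → A) (a : A) : 0 ≤ empP x a := by
  unfold empP
  positivity

theorem natCast_mul_empP (x : Fin n → A) (a : A) : (n : ℝ) * empP x a = #{i | x i = a} := by
  rcases n.eq_zero_or_pos with rfl | hn
  · simp [Finset.univ_eq_empty]
  · rw [empP, mul_div_cancel₀ _ (by positivity)]

theorem sum_empP_le_one (x : Fin n → A) : ∑ a, empP x a ≤ 1 := by
  have hcard : ∑ a, (#{i | x i = a} : ℝ) = n := by
    have := card_eq_sum_card_fiberwise (f := x) (s := univ) (t := univ) fun i _ => mem_univ _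
    rw [card_univ, Fintype.card_fin] at this
    exact_mod_cast this.symm
  simp only [empP]
  rw [← sum_div, hcard]
  exact div_self_le_one _

theorem exp_mul_klDiv_empP {P : A → ℝ} (hP : ∀ a, 0 < P a) (x : Fin n → A) :
    Real.exp (n * klDiv (empP x) P) = ∏ a, (empP x a / P a) ^ #{i | x i = a} := by
  rw [klDiv, mul_sum, Real.exp_sum]
  refine prod_congr rfl fun a _ => ?_
  split_ifs with hpos
  · rw [← mul_assoc, natCast_mul_empP, Real.exp_nat_mul, Real.exp_log (div_pos hpos (hP a))]
  · have hzero : empP x a = 0 := le_antisymm (not_lt.mp hpos) (empP_nonneg x a)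
    have hcount : (#{i | x i = a} : ℝ) = 0 := by rw [← natCast_mul_empP, hzero, mul_zero]
    rw [Nat.cast_eq_zero.mp hcount, mul_zero, Real.exp_zero, pow_zero]

theorem seqProb_mul_exp_klDiv_empP {P : A → ℝ} (hP : ∀ a, 0 < P a) (x : Fin n → A) :
    seqProb P x * Real.exp (n * klDiv (empP x) P) = seqProb (empP x) x := by
  rw [exp_mul_klDiv_empP hP, seqProb_eq_prod_pow, seqProb_eq_prod_pow, ← prod_mul_distrib]
  refine prod_congr rfl fun a _ => ?_
  rw [← mul_pow, mul_div_cancel₀ _ (hP a).ne']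

theorem card_image_empP_le :
    #(univ.image (empP : (Fin n → A) → A → ℝ)) ≤ (n + 1) ^ Fintype.card A := by
  have hcount : ∀ (x : Fin n → A) a, #{i | x i = a} < n + 1 := fun x a =>
    Nat.lt_succ_of_le ((card_filter_le _ _).trans (card_fin n).le)
  have hsub : univ.image (empP : (Fin n → A) → A → ℝ)
      ⊆ univ.image fun (t : A → Fin (n + 1)) a => ((t a : ℕ) : ℝ) / n := by
    intro Q hQ
    obtain ⟨x, -, rfl⟩ := mem_image.mp hQ
    exact mem_image.mpr ⟨fun a => ⟨_, hcount x a⟩, mem_univ _, rfl⟩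
  calc #(univ.image (empP : (Fin n → A) → A → ℝ))
      ≤ #(univ : Finset (A → Fin (n + 1))) := (card_le_card hsub).trans card_image_le
    _ = (n + 1) ^ Fintype.card A := by simp

theorem sum_seqProb_empP_le : ∑ x : Fin n → A, seqProb (empP x) x ≤ (n + 1) ^ Fintype.card A := by
  rw [← sum_fiberwise_of_maps_to (g := empP) (t := univ.image empP) fun x _ =>
    mem_image_of_mem _ (mem_univ x)]
  have hfiber : ∀ Q ∈ univ.image (empP : (Fin n → A) → A → ℝ),
      ∑ x ∈ univ.filter fun x : Fin n → A => empP x = Q, seqProb (empP x) x ≤ 1 := by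
    intro Q hQ
    obtain ⟨x₀, -, rfl⟩ := mem_image.mp hQ
    calc ∑ x with empP x = empP x₀, seqProb (empP x) x
        = ∑ x with empP x = empP x₀, seqProb (empP x₀) x :=
          sum_congr rfl fun x hx => by rw [(mem_filter.mp hx).2]
      _ ≤ ∑ x, seqProb (empP x₀) x :=
          sum_le_sum_of_subset_of_nonneg (filter_subset _ _)
            fun x _ _ => seqProb_nonneg (empP_nonneg x₀) x
      _ ≤ 1 := sum_seqProb_le_one (empP_nonneg x₀) (sum_empP_le_one x₀)
  calc _ ≤ #(univ.image (empP : (Fin n → A) → A → ℝ)) • (1 : ℝ) :=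
        sum_le_card_nsmul _ _ _ hfiber
    _ ≤ (n + 1) ^ Fintype.card A := by
      rw [nsmul_one]
      exact_mod_cast card_image_empP_le

end EmpiricalTypes

theorem PFP_le_of_forall_le {A : Type} [Fintype A] {n : ℕ} {P : A → ℝ} (hP : ∀ a, 0 ≤ P a)
    {dn : (Fin n → A) → (Fin n → A) → ℝ} {Δ : ℝ} {W : (Fin n → A) → (Fin n → A) → ℝ}
    (hW : InC dn Δ W) {Φ : (Fin n → A) → ℝ} {g : (Fin n → A) → ℝ}
    (hΦ : ∀ x y, dn x y ≤ n * Δ → Φ y ≤ g x) :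
    PFP P Φ W ≤ ∑ x, seqProb P x * g x := by
  obtain ⟨⟨hW_nonneg, hW_sum⟩, hW_zero⟩ := hW
  refine sum_le_sum fun x _ => ?_
  calc ∑ y, seqProb P x * W x y * Φ y
      ≤ ∑ y, seqProb P x * W x y * g x := by
        refine sum_le_sum fun y _ => ?_
        by_cases hxy : dn x y ≤ n * Δ
        · exact mul_le_mul_of_nonneg_left (hΦ x y hxy)
            (mul_nonneg (seqProb_nonneg hP x) (hW_nonneg x y))
        · rw [hW_zero x y (not_le.mp hxy)]
          simp
    _ = seqProb P x * g x := by rw [← sum_mul, ← mul_sum, hW_sum, mul_one]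

theorem exp_neg_mul_max_sub_sInf_le {S : Set ℝ} (hS : BddBelow S) {v : ℝ} (hv : v ∈ S)
    {c : ℝ} (hc : 0 ≤ c) (lam : ℝ) :
    Real.exp (-c * max (lam - sInf S) 0) ≤ Real.exp (-c * (lam - v)) := by
  have : lam - v ≤ max (lam - sInf S) 0 := le_max_of_le_left (by linarith [csInf_le hS hv])
  exact Real.exp_le_exp.mpr (mul_le_mul_of_nonpos_left this (neg_nonpos.mpr hc))

theorem np_defence_fp_constraint_general
    {A : Type} [Fintype A] [DecidableEq A] {n : ℕ}
    (dn : (Fin n → A) → (Fin n → A) → ℝ)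
    (P0 : A → ℝ) (hP0pos : ∀ a, 0 < P0 a)
    (Δ0 lam : ℝ) :
    ∀ W, InC dn Δ0 W →
      PFP P0
        (fun y : Fin n → A =>
          Real.exp (-(n : ℝ) *
            max (lam - sInf {v | ∃ x : Fin n → A,
              dn x y ≤ (n : ℝ) * Δ0 ∧ v = klDiv (empP x) P0}) 0)) W
        ≤ ((n : ℝ) + 1) ^
              ((Fintype.card A ^ 2 + 2 * Fintype.card A) * (Fintype.card A - 1)
                + Fintype.card A) *
            Real.exp (-(n : ℝ) * lam) := by
  intro W hW
  have hΦ : ∀ x y, dn x y ≤ n * Δ0 →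
      Real.exp (-(n : ℝ) * max (lam - sInf {v | ∃ x : Fin n → A,
        dn x y ≤ (n : ℝ) * Δ0 ∧ v = klDiv (empP x) P0}) 0)
        ≤ Real.exp (-(n : ℝ) * (lam - klDiv (empP x) P0)) := by
    intro x y hxy
    apply exp_neg_mul_max_sub_sInf_le _ _ n.cast_nonneg
    · refine (Set.finite_range fun x : Fin n → A => klDiv (empP x) P0).subset ?_ |>.bddBelow
      rintro _ ⟨x', -, rfl⟩
      exact ⟨x', rfl⟩
    · exact ⟨x, hxy, rfl⟩
  calc _ ≤ ∑ x, seqProb P0 x * Real.exp (-(n : ℝ) * (lam - klDiv (empP x) P0)) :=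
        PFP_le_of_forall_le (fun a => (hP0pos a).le) hW hΦ
    _ = Real.exp (-(n : ℝ) * lam) * ∑ x : Fin n → A, seqProb (empP x) x := by
        rw [mul_sum]
        refine sum_congr rfl fun x _ => ?_
        have hexp : Real.exp (-(n : ℝ) * (lam - klDiv (empP x) P0))
            = Real.exp (-(n : ℝ) * lam) * Real.exp (n * klDiv (empP x) P0) := by
          rw [← Real.exp_add]
          ring_nf
        rw [← seqProb_mul_exp_klDiv_empP hP0pos, hexp]
        ring
    _ ≤ Real.exp (-(n : ℝ) * lam) * ((n : ℝ) + 1) ^ Fintype.card A := by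
        gcongr
        exact sum_seqProb_empP_le
    _ ≤ _ := by
        rw [mul_comm]
        gcongr
        · exact le_add_of_nonneg_left n.cast_nonneg
        · exact Nat.le_add_left _ _

/-- Lemma 1, part (b): the defence rule `Φ*` asymptotically meets the
false-positive constraint. -/
theorem np_defence_fp_constraint
    {A : Type} [Fintype A] [DecidableEq A] [Nonempty A] {n : ℕ} (hn : 1 ≤ n)
    (dn : (Fin n → A) → (Fin n → A) → ℝ)
    (hdnn : ∀ x y, 0 ≤ dn x y)
    (hdperm : ∀ (π : Equiv.Perm (Fin n)) (x y : Fin n → A), dn (x ∘ π) (y ∘ π) = dn x y)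
    (hdrefl : ∀ y, dn y y = 0)
    (P0 : A → ℝ) (hP0 : IsPMF P0) (hP0pos : ∀ a, 0 < P0 a)
    (Δ0 lam : ℝ) (hΔ0 : 0 ≤ Δ0) (hlam : 0 < lam) :
    ∀ W, InC dn Δ0 W →
      PFP P0
        (fun y : Fin n → A =>
          Real.exp (-(n : ℝ) *
            max (lam - sInf {v | ∃ x : Fin n → A,
              dn x y ≤ (n : ℝ) * Δ0 ∧ v = klDiv (empP x) P0}) 0)) W
        ≤ ((n : ℝ) + 1) ^
              ((Fintype.card A ^ 2 + 2 * Fintype.card A) * (Fintype.card A - 1)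
                + Fintype.card A) *
            Real.exp (-(n : ℝ) * lam) :=
  np_defence_fp_constraint_general dn P0 hP0pos Δ0 lam
end
end

section
/- (General-distortion inequality between the fully active and summed-distortion exponents.) Let A be a nonempty finite set and let d : A × A → ℝ be nonnegative, symmetric, with d(a,a) = 0 for all a. Let P_0, P_1 be strictly positive PMFs on A, and let λ, Δ_0, Δ_1 ≥ 0. Then min over PMFs P_Y with D̃_{Δ_0}(P_Y, P_0) ≤ λ of D̃_{Δ_1}(P_Y, P_1) is at most min over PMFs P_Z with D(P_Z ‖ P_0) ≤ λ of D̃_{Δ_0 + Δ_1}(P_Z, P_1). -/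
open scoped Classical
open Finset Filter

noncomputable section

/-!
Take `PZ` with `D(PZ‖P₀) ≤ λ` and a near-optimal coupling `Q` of `(PX, PZ)` for
`D̃_{Δ₀+Δ₁}(PZ, P₁)`, and split its distortion as `θ·E_Q d ≤ Δ₁`, `(1-θ)·E_Q d ≤ Δ₀`.
The intermediate law `PY := θ·PZ + (1-θ)·PX` is reached from `PX` by the mixture of `Q` with
the zero-cost diagonal coupling of `PX`, at cost `θ·E_Q d`, and from `PZ` by the mixture of the
diagonal coupling of `PZ` with the transpose of `Q` (here symmetry of `d` is used), at cost
`(1-θ)·E_Q d`. Hence `D̃_{Δ₀}(PY, P₀) ≤ D(PZ‖P₀) ≤ λ` and `D̃_{Δ₁}(PY, P₁) ≤ D(PX‖P₁)`.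
-/

section Couplings

variable {A : Type} [Fintype A]

lemma klDiv_nonneg {Q P : A → ℝ} (hQ : IsPMF Q) (hP : IsPMF P) (hPpos : ∀ a, 0 < P a) :
    0 ≤ klDiv Q P := by
  have hterm : ∀ a, Q a - P a ≤ if 0 < Q a then Q a * Real.log (Q a / P a) else 0 := by
    intro a
    split_ifs with hQa
    · have h := mul_le_mul_of_nonneg_left
        (Real.one_sub_inv_le_log_of_pos (div_pos hQa (hPpos a))) hQa.le
      rwa [inv_div, mul_sub, mul_one, mul_div_cancel₀ _ hQa.ne'] at h
    · linarith [hQ.1 a, hPpos a]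
  have h := Finset.sum_le_sum fun a (_ : a ∈ univ) => hterm a
  rwa [Finset.sum_sub_distrib, hQ.2, hP.2, sub_self] at h

lemma klDiv_self {P : A → ℝ} (hPpos : ∀ a, 0 < P a) : klDiv P P = 0 :=
  Finset.sum_eq_zero fun a _ => by
    rw [if_pos (hPpos a), div_self (hPpos a).ne', Real.log_one, mul_zero]

lemma IsPMF.margX {Q : A × A → ℝ} (hQ : IsPMF Q) : IsPMF (margX Q) := by
  refine ⟨fun a => Finset.sum_nonneg fun b _ => hQ.1 (a, b), ?_⟩
  rw [← hQ.2, Fintype.sum_prod_type]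
  rfl

lemma IsPMF.comp_swap {Q : A × A → ℝ} (hQ : IsPMF Q) : IsPMF (Q ∘ Prod.swap) := by
  refine ⟨fun p => hQ.1 _, ?_⟩
  rw [← hQ.2]
  exact Fintype.sum_equiv (Equiv.prodComm A A) _ _ fun _ => rfl

lemma IsPMF.margY {Q : A × A → ℝ} (hQ : IsPMF Q) : IsPMF (margY Q) :=
  hQ.comp_swap.margX

def IsCouplingWithin (d : A → A → ℝ) (Δ : ℝ) (Q : A × A → ℝ) (PX PY : A → ℝ) : Prop :=
  IsPMF Q ∧ margX Q = PX ∧ margY Q = PY ∧ expDist d Q ≤ Δ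

namespace IsCouplingWithin

variable {d : A → A → ℝ} {Δ Δ' : ℝ} {Q R : A × A → ℝ} {PX PY PX' PY' : A → ℝ}

lemma isPMF_left (h : IsCouplingWithin d Δ Q PX PY) : IsPMF PX := h.2.1 ▸ h.1.margX

lemma isPMF_right (h : IsCouplingWithin d Δ Q PX PY) : IsPMF PY := h.2.2.1 ▸ h.1.margY

lemma mono (h : IsCouplingWithin d Δ Q PX PY) (hΔ : Δ ≤ Δ') :
    IsCouplingWithin d Δ' Q PX PY :=
  ⟨h.1, h.2.1, h.2.2.1, h.2.2.2.trans hΔ⟩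

lemma swap (hdsymm : ∀ a b, d a b = d b a) (h : IsCouplingWithin d Δ Q PX PY) :
    IsCouplingWithin d Δ (Q ∘ Prod.swap) PY PX := by
  obtain ⟨hQ, hX, hY, hΔ⟩ := h
  refine ⟨hQ.comp_swap, hY, hX, ?_⟩
  refine le_of_eq_of_le (Fintype.sum_equiv (Equiv.prodComm A A) _ _ fun p => ?_) hΔ
  simp [hdsymm p.1 p.2]

lemma mix {θ : ℝ} (hθ0 : 0 ≤ θ) (hθ1 : θ ≤ 1)
    (hQ : IsCouplingWithin d Δ Q PX PY) (hR : IsCouplingWithin d Δ' R PX' PY') :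
    IsCouplingWithin d (θ * Δ + (1 - θ) * Δ') (θ • Q + (1 - θ) • R)
      (θ • PX + (1 - θ) • PX') (θ • PY + (1 - θ) • PY') := by
  obtain ⟨hQ, rfl, rfl, hQΔ⟩ := hQ
  obtain ⟨hR, rfl, rfl, hRΔ⟩ := hR
  have hθ1' : 0 ≤ 1 - θ := sub_nonneg.mpr hθ1
  refine ⟨⟨fun p => ?_, ?_⟩, ?_, ?_, ?_⟩
  · have := hQ.1 p; have := hR.1 p
    simp only [Pi.add_apply, Pi.smul_apply, smul_eq_mul]
    positivity
  · simp only [Pi.add_apply, Pi.smul_apply, smul_eq_mul, sum_add_distrib, ← mul_sum, hQ.2, hR.2]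
    ring
  · ext a; simp [margX, sum_add_distrib, mul_sum]
  · ext b; simp [margY, sum_add_distrib, mul_sum]
  · have hexp : expDist d (θ • Q + (1 - θ) • R) = θ * expDist d Q + (1 - θ) * expDist d R := by
      simp [expDist, add_mul, mul_assoc, sum_add_distrib, mul_sum]
    rw [hexp]
    gcongr

end IsCouplingWithin

def diagCoupling (P : A → ℝ) : A × A → ℝ := fun p => if p.1 = p.2 then P p.1 else 0

lemma isCouplingWithin_diagCoupling {d : A → A → ℝ} (hdrefl : ∀ a, d a a = 0) {P : A → ℝ}
    (hP : IsPMF P) : IsCouplingWithin d 0 (diagCoupling P) P P := by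
  refine ⟨⟨fun p => ?_, ?_⟩, ?_, ?_, ?_⟩
  · unfold diagCoupling; split_ifs <;> simp [hP.1]
  · simp [Fintype.sum_prod_type, diagCoupling, hP.2]
  · ext a; simp [margX, diagCoupling]
  · ext b; simp [margY, diagCoupling]
  · refine (Finset.sum_eq_zero fun p _ => ?_).le
    unfold diagCoupling
    split_ifs with h
    · rw [← h, hdrefl, mul_zero]
    · rw [zero_mul]

lemma exists_mul_le_and_one_sub_mul_le {D Δ₀ Δ₁ : ℝ} (hΔ₀ : 0 ≤ Δ₀) (hΔ₁ : 0 ≤ Δ₁)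
    (hD : D ≤ Δ₀ + Δ₁) : ∃ θ, 0 ≤ θ ∧ θ ≤ 1 ∧ θ * D ≤ Δ₁ ∧ (1 - θ) * D ≤ Δ₀ := by
  rcases le_or_gt D Δ₁ with hD₁ | hD₁
  · exact ⟨1, zero_le_one, le_rfl, by simpa using hD₁, by simpa using hΔ₀⟩
  · have hDpos : 0 < D := hΔ₁.trans_lt hD₁
    refine ⟨Δ₁ / D, by positivity, (div_le_one hDpos).mpr hD₁.le, ?_, ?_⟩
    · rw [div_mul_cancel₀ _ hDpos.ne']
    · rw [sub_mul, one_mul, div_mul_cancel₀ _ hDpos.ne']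
      linarith

lemma IsCouplingWithin.exists_intermediate {d : A → A → ℝ} (hdsymm : ∀ a b, d a b = d b a)
    (hdrefl : ∀ a, d a a = 0) {Δ₀ Δ₁ : ℝ} (hΔ₀ : 0 ≤ Δ₀) (hΔ₁ : 0 ≤ Δ₁) {Q : A × A → ℝ}
    {PX PZ : A → ℝ} (hQ : IsCouplingWithin d (Δ₀ + Δ₁) Q PX PZ) :
    ∃ PY : A → ℝ, (∃ Q₁, IsCouplingWithin d Δ₁ Q₁ PX PY) ∧
      ∃ Q₂, IsCouplingWithin d Δ₀ Q₂ PZ PY := by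
  obtain ⟨θ, hθ0, hθ1, hθD₁, hθD₀⟩ := exists_mul_le_and_one_sub_mul_le hΔ₀ hΔ₁ hQ.2.2.2
  have hQ' : IsCouplingWithin d (expDist d Q) Q PX PZ := ⟨hQ.1, hQ.2.1, hQ.2.2.1, le_rfl⟩
  have hPX := hQ.isPMF_left
  have hPZ := hQ.isPMF_right
  have hconv (P : A → ℝ) : θ • P + (1 - θ) • P = P := by rw [← add_smul]; simp
  refine ⟨θ • PZ + (1 - θ) • PX, ⟨θ • Q + (1 - θ) • diagCoupling PX, ?_⟩,
    ⟨θ • diagCoupling PZ + (1 - θ) • (Q ∘ Prod.swap), ?_⟩⟩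
  · have h := hQ'.mix hθ0 hθ1 (isCouplingWithin_diagCoupling hdrefl hPX)
    rw [hconv] at h
    exact h.mono (by linarith)
  · have h := (isCouplingWithin_diagCoupling hdrefl hPZ).mix hθ0 hθ1 (hQ'.swap hdsymm)
    rw [hconv] at h
    exact h.mono (by linarith)

variable {d : A → A → ℝ} {Δ : ℝ} {P : A → ℝ}

lemma Dtilde_nonneg (hP : IsPMF P) (hPpos : ∀ a, 0 < P a) (PY : A → ℝ) :
    0 ≤ Dtilde d Δ PY P :=
  Real.sInf_nonneg <| by
    rintro _ ⟨Q, hQ, -, -, rfl⟩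
    exact klDiv_nonneg hQ.margX hP hPpos

lemma Dtilde_le_klDiv (hP : IsPMF P) (hPpos : ∀ a, 0 < P a) {Q : A × A → ℝ} {PX PY : A → ℝ}
    (hQ : IsCouplingWithin d Δ Q PX PY) : Dtilde d Δ PY P ≤ klDiv PX P := by
  obtain ⟨hQ, rfl, rfl, hQΔ⟩ := hQ
  refine csInf_le ⟨0, ?_⟩ ⟨Q, hQ, rfl, hQΔ, rfl⟩
  rintro _ ⟨Q', hQ', -, -, rfl⟩
  exact klDiv_nonneg hQ'.margX hP hPpos

lemma exists_isCouplingWithin_klDiv_lt (hdrefl : ∀ a, d a a = 0) (hΔ : 0 ≤ Δ) {PY : A → ℝ}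
    (hPY : IsPMF PY) {ε : ℝ} (hε : 0 < ε) :
    ∃ Q PX, IsCouplingWithin d Δ Q PX PY ∧ klDiv PX P < Dtilde d Δ PY P + ε := by
  have hne : Set.Nonempty {v | ∃ Q : A × A → ℝ,
      IsPMF Q ∧ margY Q = PY ∧ expDist d Q ≤ Δ ∧ v = klDiv (margX Q) P} :=
    have h := (isCouplingWithin_diagCoupling hdrefl hPY).mono hΔ
    ⟨_, _, h.1, h.2.2.1, h.2.2.2, rfl⟩
  obtain ⟨_, ⟨Q, hQ, hQY, hQΔ, rfl⟩, hlt⟩ := exists_lt_of_csInf_lt hne (lt_add_of_pos_right _ hε)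
  exact ⟨Q, _, ⟨hQ, rfl, hQY, hQΔ⟩, hlt⟩

end Couplings

theorem fully_active_le_summed_general_general
    {A : Type} [Fintype A]
    (d : A → A → ℝ)
    (hdsymm : ∀ a b, d a b = d b a)
    (hdrefl : ∀ a, d a a = 0)
    (P0 P1 : A → ℝ) (hP0 : IsPMF P0) (hP1 : IsPMF P1)
    (hP0pos : ∀ a, 0 < P0 a) (hP1pos : ∀ a, 0 < P1 a)
    (lam Δ0 Δ1 : ℝ) (hlam : 0 ≤ lam) (hΔ0 : 0 ≤ Δ0) (hΔ1 : 0 ≤ Δ1) :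
    sInf {v | ∃ PY : A → ℝ,
        IsPMF PY ∧ Dtilde d Δ0 PY P0 ≤ lam ∧ v = Dtilde d Δ1 PY P1}
      ≤ sInf {v | ∃ PZ : A → ℝ,
        IsPMF PZ ∧ klDiv PZ P0 ≤ lam ∧ v = Dtilde d (Δ0 + Δ1) PZ P1} := by
  refine le_csInf ⟨_, P0, hP0, (klDiv_self hP0pos).trans_le hlam, rfl⟩ ?_
  rintro _ ⟨PZ, hPZ, hPZlam, rfl⟩
  refine le_of_forall_pos_le_add fun ε hε => ?_
  obtain ⟨Q, PX, hQ, hlt⟩ :=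
    exists_isCouplingWithin_klDiv_lt (P := P1) hdrefl (add_nonneg hΔ0 hΔ1) hPZ hε
  obtain ⟨PY, ⟨Q₁, hQ₁⟩, ⟨Q₂, hQ₂⟩⟩ := hQ.exists_intermediate hdsymm hdrefl hΔ0 hΔ1
  have hbdd : BddBelow {v | ∃ PY : A → ℝ,
      IsPMF PY ∧ Dtilde d Δ0 PY P0 ≤ lam ∧ v = Dtilde d Δ1 PY P1} :=
    ⟨0, by rintro _ ⟨PY, -, -, rfl⟩; exact Dtilde_nonneg hP1 hP1pos PY⟩
  calc _ ≤ Dtilde d Δ1 PY P1 :=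
        csInf_le hbdd ⟨PY, hQ₂.isPMF_right,
          (Dtilde_le_klDiv hP0 hP0pos hQ₂).trans hPZlam, rfl⟩
    _ ≤ klDiv PX P1 := Dtilde_le_klDiv hP1 hP1pos hQ₁
    _ ≤ _ := hlt.le

/-- general-distortion inequality between the fully active and
summed-distortion exponents. -/
theorem fully_active_le_summed_general
    {A : Type} [Fintype A] [Nonempty A]
    (d : A → A → ℝ) (hd : ∀ a b, 0 ≤ d a b)
    (hdsymm : ∀ a b, d a b = d b a)
    (hdrefl : ∀ a, d a a = 0)
    (P0 P1 : A → ℝ) (hP0 : IsPMF P0) (hP1 : IsPMF P1)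
    (hP0pos : ∀ a, 0 < P0 a) (hP1pos : ∀ a, 0 < P1 a)
    (lam Δ0 Δ1 : ℝ) (hlam : 0 ≤ lam) (hΔ0 : 0 ≤ Δ0) (hΔ1 : 0 ≤ Δ1) :
    sInf {v | ∃ PY : A → ℝ,
        IsPMF PY ∧ Dtilde d Δ0 PY P0 ≤ lam ∧ v = Dtilde d Δ1 PY P1}
      ≤ sInf {v | ∃ PZ : A → ℝ,
        IsPMF PZ ∧ klDiv PZ P0 ≤ lam ∧ v = Dtilde d (Δ0 + Δ1) PZ P1} :=
  fully_active_le_summed_general_general d hdsymm hdrefl P0 P1 hP0 hP1 hP0pos hP1pos lam Δ0 Δ1 hlam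
    hΔ0 hΔ1
end
end

section
/- (Exponential characterization of the output distribution induced by the optimum attack channel; the key estimate behind Theorem 5.) Let A be a nonempty finite set, d : A × A → ℝ nonnegative with d(a,a) = 0 for all a (extended additively to sequences), P a strictly positive PMF on A, Δ ≥ 0 and n ≥ 1. Let A*_Δ be the channel defined below and let Q*(y) = ∑_{x∈A^n} (∏_{i=1}^n P(x_i)) · A*_Δ(y|x). Then for every y ∈ A^n, (n+1)^{−2|A|²} · exp( −n·( Ĥ(y) + D̃ⁿ_Δ(y,P) ) ) ≤ Q*(y) ≤ (n+1)^{|A|²} · exp( −n·( Ĥ(y) + D̃ⁿ_Δ(y,P) ) ), where Ĥ(y) = −∑_{a : P̂_y(a)>0} P̂_y(a)·ln P̂_y(a) is the empirical entropy of y and D̃ⁿ_Δ(y,P) = min_{x ∈ A^n : d(x,y) ≤ nΔ} D(P̂_x ‖ P). -/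
open scoped Classical
open Finset Filter

noncomputable section

/-!
Write `T_y` for the type class of `y`. The channel `A*_Δ` is invariant under permuting the
coordinates of input and output simultaneously, so `Q*` is constant on `T_y` and
`|T_y| Q*(y) = ∑ₓ Pⁿ(x) ∑_{y' ∈ T_y} A*_Δ(y'|x) = ∑ₓ Pⁿ(x) K(x) / N(x)`, where
`N(x) = 1 / c_n(x) ≤ (n+1)^{|A|²}` counts the admissible conditional type classes of `x` and
`K(x) ≤ N(x)` those contained in `T_y`. If `K(x) > 0`, some permutation of `x` is admissible for
`y`, so `D(P̂_x‖P) ≥ D̃ⁿ_Δ(y,P)`; and `K ≥ 1` on the whole type class of a minimiser. With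
`Pⁿ(T_x) = exp(-n D(P̂_x‖P))`, `|T_y| = exp(n Ĥ(y))` and at most `(n+1)^{|A|-1}` types, all up to
factors `(n+1)^{|A|-1}`, both bounds follow. The type-class estimates come from the fact that the
empirical distribution of `w` gives `T_w` the largest probability among all type classes.
-/

open scoped Nat

theorem Finset.sum_inv_card_fiber_eq_card_image {α β : Type*} [DecidableEq β]
    (s : Finset α) (f : α → β) :
    ∑ a ∈ s, ((s.filter fun b => f b = f a).card : ℝ)⁻¹ = (s.image f).card := by
  rw [← sum_fiberwise_of_maps_to fun a ha => mem_image_of_mem f ha, card_eq_sum_ones,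
    Nat.cast_sum]
  refine sum_congr rfl fun c hc => ?_
  obtain ⟨a, ha, rfl⟩ := mem_image.1 hc
  have hfiber : (s.filter fun b => f b = f a).card ≠ 0 :=
    card_ne_zero_of_mem (mem_filter.2 ⟨ha, rfl⟩)
  rw [sum_congr rfl fun b hb => by rw [(mem_filter.1 hb).2], sum_const, nsmul_eq_mul,
    mul_inv_cancel₀ (by exact_mod_cast hfiber), Nat.cast_one]

theorem Finset.card_le_succ_pow_of_eqOn {ι : Type*} (s : Finset (ι → ℕ)) (t : Finset ι)
    (n : ℕ) (hle : ∀ f ∈ s, ∀ i ∈ t, f i ≤ n)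
    (hinj : ∀ f ∈ s, ∀ g ∈ s, Set.EqOn f g t → f = g) : #s ≤ (n + 1) ^ #t := by
  have hmaps : ∀ f ∈ s, (fun i : t => f i) ∈ Fintype.piFinset fun _ => range (n + 1) :=
    fun f hf => Fintype.mem_piFinset.2 fun i => mem_range.2 (Nat.lt_succ_of_le (hle f hf i i.2))
  calc #s ≤ #(Fintype.piFinset fun _ : t => range (n + 1)) :=
        card_le_card_of_injOn _ hmaps fun f hf g hg hfg =>
          hinj f hf g hg fun i hi => congrFun hfg ⟨i, hi⟩
    _ = (n + 1) ^ #t := by simp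

theorem Nat.factorial_mul_pow_le_factorial_mul_pow (m k : ℕ) : m ! * m ^ k ≤ k ! * m ^ m := by
  rcases le_total m k with h | h
  · calc m ! * m ^ k = m ! * m ^ (k - m) * m ^ m := by
          rw [mul_assoc, ← pow_add, Nat.sub_add_cancel h]
      _ ≤ k ! * m ^ m := Nat.mul_le_mul_right _ (Nat.factorial_mul_pow_sub_le_factorial h)
  · calc m ! * m ^ k = k ! * m.descFactorial (m - k) * m ^ k := by
          rw [← Nat.factorial_mul_descFactorial (Nat.sub_le m k), Nat.sub_sub_self h]
      _ ≤ k ! * m ^ (m - k) * m ^ k := by gcongr; exact Nat.descFactorial_le_pow _ _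
      _ = k ! * m ^ m := by rw [mul_assoc, ← pow_add, Nat.sub_add_cancel h]

namespace MethodOfTypes

open Real

variable {B : Type} {n : ℕ}

def compPerm (σ : Equiv.Perm (Fin n)) : (Fin n → B) ≃ (Fin n → B) :=
  σ.symm.arrowCongr (Equiv.refl B)

@[simp] theorem compPerm_apply (σ : Equiv.Perm (Fin n)) (z : Fin n → B) :
    compPerm σ z = z ∘ σ := rfl

@[simp] theorem compPerm_symm_apply (σ : Equiv.Perm (Fin n)) (z : Fin n → B) :
    (compPerm σ).symm z = z ∘ σ.symm := rfl

theorem seqProb_nonneg {q : B → ℝ} (hq : ∀ b, 0 ≤ q b) (w : Fin n → B) : 0 ≤ seqProb q w :=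
  prod_nonneg fun i _ => hq (w i)

theorem seqProb_comp_perm (q : B → ℝ) (x : Fin n → B) (σ : Equiv.Perm (Fin n)) :
    seqProb q (x ∘ σ) = seqProb q x :=
  Equiv.prod_comp σ fun i => q (x i)

theorem dSeq_comp_perm (d : B → B → ℝ) (x y : Fin n → B) (σ : Equiv.Perm (Fin n)) :
    dSeq d (x ∘ σ) (y ∘ σ) = dSeq d x y :=
  Equiv.sum_comp σ fun i => d (x i) (y i)

section Fintype

variable [Fintype B]

def outputProb (P : B → ℝ) (W : (Fin n → B) → (Fin n → B) → ℝ) (y : Fin n → B) : ℝ :=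
  ∑ x, seqProb P x * W x y

theorem outputProb_comp_perm (P : B → ℝ) {W : (Fin n → B) → (Fin n → B) → ℝ}
    (hW : ∀ x y (σ : Equiv.Perm (Fin n)), W (x ∘ σ) (y ∘ σ) = W x y) (y : Fin n → B)
    (σ : Equiv.Perm (Fin n)) :
    outputProb P W (y ∘ σ) = outputProb P W y := by
  rw [outputProb, ← Equiv.sum_comp (compPerm σ)]
  simp only [compPerm_apply, seqProb_comp_perm, hW, outputProb]

theorem outputProb_nonneg {P : B → ℝ} (hP : ∀ b, 0 ≤ P b) {W : (Fin n → B) → (Fin n → B) → ℝ}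
    (hW : ∀ x y, 0 ≤ W x y) (y : Fin n → B) : 0 ≤ outputProb P W y :=
  sum_nonneg fun x _ => mul_nonneg (seqProb_nonneg hP x) (hW x y)

end Fintype

variable [DecidableEq B]

def count (w : Fin n → B) (b : B) : ℕ := (univ.filter fun i => w i = b).card

theorem count_le (w : Fin n → B) (b : B) : count w b ≤ n :=
  (card_filter_le _ _).trans_eq (card_fin n)

theorem count_comp_perm (w : Fin n → B) (σ : Equiv.Perm (Fin n)) : count (w ∘ σ) = count w :=
  funext fun b => card_equiv σ fun i => by simp

theorem exists_perm_of_count_eq {v w : Fin n → B} (h : count v = count w) :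
    ∃ σ : Equiv.Perm (Fin n), v = w ∘ σ := by
  have e : ∀ b, {i // v i = b} ≃ {i // w i = b} := fun b =>
    Fintype.equivOfCardEq <| by simpa [Fintype.card_subtype, count] using congrFun h b
  exact ⟨Equiv.ofFiberEquiv e, funext fun i => (Equiv.ofFiberEquiv_map e i).symm⟩

variable [Fintype B]

def typeClass (w : Fin n → B) : Finset (Fin n → B) := univ.filter fun v => count v = count w

theorem mem_typeClass {v w : Fin n → B} : v ∈ typeClass w ↔ count v = count w := by
  simp [typeClass]

theorem card_typeClass_pos (w : Fin n → B) : 0 < #(typeClass w) :=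
  card_pos.2 ⟨w, mem_typeClass.2 rfl⟩

theorem sum_count (w : Fin n → B) : ∑ b, count w b = n := by
  simpa [count] using (card_eq_sum_card_fiberwise (s := univ) fun i _ => mem_univ (w i)).symm

theorem card_typeClass_mul_prod_factorial (w : Fin n → B) :
    #(typeClass w) * ∏ b, (count w b)! = n ! := by
  have hstab : Fintype.card {τ : Equiv.Perm (Fin n) // w ∘ τ = w} = ∏ b, (count w b)! := by
    rw [DomMulAct.stabilizer_card]
    simp [Fintype.card_subtype, count]
  have hfiber : ∀ v ∈ typeClass w,
      #(univ.filter fun σ : Equiv.Perm (Fin n) => w ∘ σ = v) = ∏ b, (count w b)! := by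
    intro v hv
    obtain ⟨σ₀, rfl⟩ := exists_perm_of_count_eq (mem_typeClass.1 hv)
    rw [← hstab, Fintype.card_subtype]
    refine card_equiv (Equiv.mulRight σ₀⁻¹) fun σ => ?_
    simp only [mem_filter, mem_univ, true_and, Equiv.coe_mulRight, Equiv.Perm.coe_mul]
    constructor
    · intro h; rw [← Function.comp_assoc, h, Function.comp_assoc]; simp
    · intro h; funext i; simpa using congrFun h (σ₀ i)
  calc #(typeClass w) * ∏ b, (count w b)!
      = ∑ v ∈ typeClass w, #(univ.filter fun σ : Equiv.Perm (Fin n) => w ∘ σ = v) := by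
        rw [sum_congr rfl hfiber, sum_const, smul_eq_mul]
    _ = n ! := by
        rw [← card_eq_sum_card_fiberwise fun σ _ => mem_typeClass.2 (count_comp_perm w σ)]
        simp [Fintype.card_perm]

theorem card_image_count_le :
    #(univ.image (count : (Fin n → B) → B → ℕ)) ≤ (n + 1) ^ (Fintype.card B - 1) := by
  cases isEmpty_or_nonempty B with
  | inl _ => simpa using card_le_one_of_subsingleton _
  | inr hB =>
    obtain ⟨b₀⟩ := hB
    rw [← card_univ, ← card_erase_of_mem (mem_univ b₀)]
    refine card_le_succ_pow_of_eqOn _ _ n ?_ ?_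
    · simp only [mem_image, mem_univ, true_and]
      rintro _ ⟨w, rfl⟩ b _
      exact count_le w b
    · simp only [mem_image, mem_univ, true_and]
      rintro _ ⟨v, rfl⟩ _ ⟨w, rfl⟩ h
      funext b
      by_cases hb : b = b₀
      · subst hb
        have hv := sum_count v
        have hw := sum_count w
        rw [← add_sum_erase _ _ (mem_univ b)] at hv hw
        rw [sum_congr rfl fun c hc => h hc] at hv
        omega
      · exact h (mem_erase.2 ⟨hb, mem_univ b⟩)

theorem sum_inv_card_typeClass :
    ∑ v : Fin n → B, (#(typeClass v) : ℝ)⁻¹ = #(univ.image (count : (Fin n → B) → B → ℕ)) :=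
  sum_inv_card_fiber_eq_card_image univ count

theorem seqProb_eq_prod_pow (q : B → ℝ) (w : Fin n → B) :
    seqProb q w = ∏ b, q b ^ count w b := by
  rw [seqProb, ← prod_fiberwise' univ w]
  exact prod_congr rfl fun b _ => by rw [prod_const]; rfl

theorem seqProb_eq_of_mem_typeClass (q : B → ℝ) {v w : Fin n → B} (h : v ∈ typeClass w) :
    seqProb q v = seqProb q w := by
  rw [seqProb_eq_prod_pow, seqProb_eq_prod_pow, mem_typeClass.1 h]

theorem empP_eq_count_div (w : Fin n → B) (b : B) : empP w b = count w b / n := rfl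

theorem natCast_mul_empP (w : Fin n → B) (b : B) : (n : ℝ) * empP w b = count w b := by
  rcases Nat.eq_zero_or_pos n with rfl | hn
  · simp [count]
  · rw [empP_eq_count_div, mul_div_cancel₀ _ (by positivity)]

theorem empP_pos_iff {w : Fin n → B} {b : B} : 0 < empP w b ↔ 0 < count w b := by
  rw [empP_eq_count_div]
  constructor
  · intro h
    by_contra h0
    simp [Nat.eq_zero_of_not_pos h0] at h
  · intro h
    have : 0 < n := h.trans_le (count_le w b)
    positivity

theorem empP_comp_perm (x : Fin n → B) (σ : Equiv.Perm (Fin n)) : empP (x ∘ σ) = empP x := by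
  funext b
  rw [empP_eq_count_div, empP_eq_count_div, count_comp_perm]

theorem sum_seqProb_empP (w : Fin n → B) : ∑ v : Fin n → B, seqProb (empP w) v = 1 := by
  rw [show ∑ v : Fin n → B, seqProb (empP w) v = (∑ b, empP w b) ^ n by
    rw [Fintype.sum_pow]; rfl]
  rcases Nat.eq_zero_or_pos n with rfl | hn
  · exact pow_zero _
  · simp only [empP_eq_count_div, ← sum_div, ← Nat.cast_sum, sum_count]
    rw [div_self (by positivity), one_pow]

theorem seqProb_eq_exp_sum (q : B → ℝ) (w : Fin n → B) (hq : ∀ b, 0 < count w b → 0 < q b) :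
    seqProb q w = exp (n * ∑ b, if 0 < empP w b then empP w b * log (q b) else 0) := by
  rw [mul_sum, exp_sum, seqProb_eq_prod_pow]
  refine prod_congr rfl fun b _ => ?_
  split_ifs with h
  · rw [← mul_assoc, natCast_mul_empP, exp_nat_mul, exp_log (hq b (empP_pos_iff.1 h))]
  · rw [Nat.eq_zero_of_not_pos (mt empP_pos_iff.2 h), mul_zero, exp_zero, pow_zero]

theorem seqProb_empP_self (w : Fin n → B) : seqProb (empP w) w = exp (-n * empEnt w) := by
  rw [seqProb_eq_exp_sum _ _ fun b hb => empP_pos_iff.2 hb, empEnt, neg_mul_neg]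

theorem seqProb_eq_exp_neg {q : B → ℝ} (hq : ∀ b, 0 < q b) (w : Fin n → B) :
    seqProb q w = exp (-n * empEnt w) * exp (-n * klDiv (empP w) q) := by
  rw [← exp_add, seqProb_eq_exp_sum q w fun b _ => hq b, empEnt, klDiv]
  have hterm : ∀ b, (if 0 < empP w b then empP w b * log (q b) else 0)
      = (if 0 < empP w b then empP w b * log (empP w b) else 0)
        - if 0 < empP w b then empP w b * log (empP w b / q b) else 0 := by
    intro b
    split_ifs with h
    · rw [log_div h.ne' (hq b).ne']; ring
    · simp
  rw [sum_congr rfl fun b _ => hterm b, sum_sub_distrib]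
  congr 1
  ring

theorem seqProb_empP_eq_div (w v : Fin n → B) :
    seqProb (empP w) v = ((∏ b, count w b ^ count v b : ℕ) : ℝ) / n ^ n := by
  simp only [seqProb_eq_prod_pow, empP_eq_count_div, div_pow, prod_div_distrib,
    prod_pow_eq_pow_sum, sum_count, Nat.cast_prod, Nat.cast_pow]

-- Clearing the multinomial denominators leaves `m! m^k ≤ k! m^m` letter by letter.
theorem card_typeClass_mul_seqProb_empP_le (w v : Fin n → B) :
    #(typeClass v) * seqProb (empP w) v ≤ #(typeClass w) * seqProb (empP w) w := by
  have key : #(typeClass v) * ∏ b, count w b ^ count v b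
      ≤ #(typeClass w) * ∏ b, count w b ^ count w b := by
    refine Nat.le_of_mul_le_mul_right ?_
      (by positivity : 0 < (∏ b, (count v b)!) * ∏ b, (count w b)!)
    calc #(typeClass v) * (∏ b, count w b ^ count v b) * ((∏ b, (count v b)!) * ∏ b, (count w b)!)
        = (#(typeClass v) * ∏ b, (count v b)!) * ∏ b, ((count w b)! * count w b ^ count v b) := by
          rw [prod_mul_distrib]; ring
      _ ≤ (#(typeClass w) * ∏ b, (count w b)!) * ∏ b, ((count v b)! * count w b ^ count w b) := by
          rw [card_typeClass_mul_prod_factorial, card_typeClass_mul_prod_factorial]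
          exact Nat.mul_le_mul_left _ (prod_le_prod' fun b _ =>
            Nat.factorial_mul_pow_le_factorial_mul_pow _ _)
      _ = #(typeClass w) * (∏ b, count w b ^ count w b)
            * ((∏ b, (count v b)!) * ∏ b, (count w b)!) := by
          rw [prod_mul_distrib]; ring
  rw [seqProb_empP_eq_div, seqProb_empP_eq_div, ← mul_div_assoc, ← mul_div_assoc]
  exact div_le_div_of_nonneg_right (by exact_mod_cast key) (by positivity)

theorem card_typeClass_mul_exp_le_one (w : Fin n → B) :
    #(typeClass w) * exp (-n * empEnt w) ≤ 1 :=
  calc #(typeClass w) * exp (-n * empEnt w) = ∑ v ∈ typeClass w, seqProb (empP w) v := by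
        rw [sum_congr rfl fun v hv => by rw [seqProb_eq_of_mem_typeClass _ hv, seqProb_empP_self],
          sum_const, nsmul_eq_mul]
    _ ≤ ∑ v, seqProb (empP w) v :=
        sum_le_sum_of_subset_of_nonneg (subset_univ _) fun v _ _ =>
          seqProb_nonneg (fun b => by rw [empP_eq_count_div]; positivity) v
    _ = 1 := sum_seqProb_empP w

theorem one_le_card_typeClass_mul_exp (w : Fin n → B) :
    1 ≤ (n + 1) ^ (Fintype.card B - 1) * (#(typeClass w) * exp (-n * empEnt w)) :=
  calc (1 : ℝ) = ∑ v, (#(typeClass v) : ℝ)⁻¹ * (#(typeClass v) * seqProb (empP w) v) := by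
        rw [← sum_seqProb_empP w]
        exact sum_congr rfl fun v _ => by
          rw [inv_mul_cancel_left₀ (by exact_mod_cast (card_typeClass_pos v).ne')]
    _ ≤ ∑ v, (#(typeClass v) : ℝ)⁻¹ * (#(typeClass w) * seqProb (empP w) w) :=
        sum_le_sum fun v _ => mul_le_mul_of_nonneg_left
          (card_typeClass_mul_seqProb_empP_le w v) (by positivity)
    _ ≤ (n + 1) ^ (Fintype.card B - 1) * (#(typeClass w) * exp (-n * empEnt w)) := by
        rw [← sum_mul, sum_inv_card_typeClass, seqProb_empP_self]
        gcongr
        exact_mod_cast card_image_count_le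

theorem card_typeClass_mul_seqProb_le {q : B → ℝ} (hq : ∀ b, 0 < q b) (w : Fin n → B) :
    #(typeClass w) * seqProb q w ≤ exp (-n * klDiv (empP w) q) := by
  rw [seqProb_eq_exp_neg hq, ← mul_assoc]
  exact mul_le_of_le_one_left (exp_pos _).le (card_typeClass_mul_exp_le_one w)

theorem exp_le_card_typeClass_mul_seqProb {q : B → ℝ} (hq : ∀ b, 0 < q b) (w : Fin n → B) :
    exp (-n * klDiv (empP w) q)
      ≤ (n + 1) ^ (Fintype.card B - 1) * (#(typeClass w) * seqProb q w) := by
  rw [seqProb_eq_exp_neg hq, ← mul_assoc (#(typeClass w) : ℝ), ← mul_assoc]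
  exact le_mul_of_one_le_left (exp_pos _).le (one_le_card_typeClass_mul_exp w)

theorem mem_condTypeClass {x y y' : Fin n → B} :
    y' ∈ condTypeClass x y ↔ count (Function.prod x y') = count (Function.prod x y) := by
  simp [condTypeClass, count, funext_iff, Prod.forall, Prod.ext_iff, Function.prod]

theorem condTypeClass_eq_iff {x y y' : Fin n → B} :
    condTypeClass x y' = condTypeClass x y ↔ y' ∈ condTypeClass x y := by
  refine ⟨fun h => h ▸ mem_condTypeClass.2 rfl, fun h => ?_⟩
  ext z
  rw [mem_condTypeClass, mem_condTypeClass, mem_condTypeClass.1 h]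

theorem exists_perm_of_mem_condTypeClass {x y y' : Fin n → B} (h : y' ∈ condTypeClass x y) :
    ∃ σ : Equiv.Perm (Fin n), x ∘ σ = x ∧ y' = y ∘ σ := by
  obtain ⟨σ, hσ⟩ := exists_perm_of_count_eq (mem_condTypeClass.1 h)
  exact ⟨σ, funext fun i => (congrArg Prod.fst (congrFun hσ i)).symm,
    funext fun i => congrArg Prod.snd (congrFun hσ i)⟩

theorem condTypeClass_comp_perm (x y : Fin n → B) (σ : Equiv.Perm (Fin n)) :
    condTypeClass (x ∘ σ) (y ∘ σ) = (condTypeClass x y).map (compPerm σ).toEmbedding := by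
  ext z
  rw [mem_map_equiv, mem_condTypeClass, mem_condTypeClass, compPerm_symm_apply]
  have hz : Function.prod (x ∘ σ) z = Function.prod x (z ∘ σ.symm) ∘ σ := by
    funext i; simp [Function.prod]
  rw [hz, count_comp_perm, show Function.prod (x ∘ σ) (y ∘ σ) = Function.prod x y ∘ σ from rfl,
    count_comp_perm]

theorem numCondTypes_comp_perm (d : B → B → ℝ) (Δ : ℝ) (x : Fin n → B)
    (σ : Equiv.Perm (Fin n)) :
    numCondTypes (dSeq d) Δ (x ∘ σ) = numCondTypes (dSeq d) Δ x := by
  have hadm : (univ.filter fun z => dSeq d (x ∘ σ) z ≤ n * Δ)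
      = (univ.filter fun z => dSeq d x z ≤ n * Δ).map (compPerm σ).toEmbedding := by
    ext z
    rw [mem_map_equiv, mem_filter, mem_filter, compPerm_symm_apply,
      ← dSeq_comp_perm d x (z ∘ σ.symm) σ]
    simp [Function.comp_assoc]
  have hclass : condTypeClass (x ∘ σ) ∘ (compPerm σ).toEmbedding
      = (fun C => C.map (compPerm σ).toEmbedding) ∘ condTypeClass x :=
    funext fun y => condTypeClass_comp_perm x y σ
  rw [numCondTypes, numCondTypes, hadm, map_eq_image, image_image, hclass, ← image_image,
    card_image_of_injective _ (Finset.map_injective _)]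

theorem Astar_comp_perm (d : B → B → ℝ) (Δ : ℝ) (x y : Fin n → B) (σ : Equiv.Perm (Fin n)) :
    Astar (dSeq d) Δ (x ∘ σ) (y ∘ σ) = Astar (dSeq d) Δ x y := by
  simp only [Astar, dSeq_comp_perm, numCondTypes_comp_perm, condTypeClass_comp_perm, card_map]

theorem Astar_nonneg (d : B → B → ℝ) (Δ : ℝ) (x y : Fin n → B) : 0 ≤ Astar (dSeq d) Δ x y := by
  unfold Astar
  split_ifs <;> positivity

theorem numCondTypes_le (dn : (Fin n → B) → (Fin n → B) → ℝ) (Δ : ℝ) (x : Fin n → B) :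
    numCondTypes dn Δ x ≤ (n + 1) ^ (Fintype.card B ^ 2) := by
  set S := univ.filter fun y => dn x y ≤ n * Δ
  calc numCondTypes dn Δ x
      = #((S.image fun y => count (Function.prod x y)).image
          fun M => univ.filter fun z => count (Function.prod x z) = M) := by
        rw [numCondTypes, image_image]
        congr 1
        refine image_congr fun y _ => ?_
        ext z
        simp [mem_condTypeClass]
    _ ≤ #(S.image fun y => count (Function.prod x y)) := card_image_le
    _ ≤ (n + 1) ^ #(univ : Finset (B × B)) := by
        refine card_le_succ_pow_of_eqOn _ univ n ?_ fun f _ g _ h => funext fun p => h (by simp)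
        simp only [mem_image]
        rintro _ ⟨y, -, rfl⟩ p -
        exact count_le _ p
    _ = (n + 1) ^ (Fintype.card B ^ 2) := by simp [sq]

theorem card_typeClass_mul_outputProb (P : B → ℝ) {W : (Fin n → B) → (Fin n → B) → ℝ}
    (hW : ∀ x y (σ : Equiv.Perm (Fin n)), W (x ∘ σ) (y ∘ σ) = W x y) (y : Fin n → B) :
    #(typeClass y) * outputProb P W y = ∑ x, seqProb P x * ∑ y' ∈ typeClass y, W x y' := by
  calc #(typeClass y) * outputProb P W y = ∑ y' ∈ typeClass y, outputProb P W y' := by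
        rw [sum_congr rfl fun y' hy' => ?_, sum_const, nsmul_eq_mul]
        obtain ⟨σ, rfl⟩ := exists_perm_of_count_eq (mem_typeClass.1 hy')
        exact outputProb_comp_perm P hW y σ
    _ = _ := by
        simp only [outputProb, mul_sum]
        exact sum_comm

def admissibleClasses (d : B → B → ℝ) (Δ : ℝ) (x y : Fin n → B) : Finset (Finset (Fin n → B)) :=
  ((typeClass y).filter fun y' => dSeq d x y' ≤ n * Δ).image (condTypeClass x)

theorem sum_Astar_typeClass (d : B → B → ℝ) (Δ : ℝ) (x y : Fin n → B) :
    ∑ y' ∈ typeClass y, Astar (dSeq d) Δ x y'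
      = #(admissibleClasses d Δ x y) / numCondTypes (dSeq d) Δ x := by
  set s := (typeClass y).filter fun y' => dSeq d x y' ≤ n * Δ
  have hfiber : ∀ y' ∈ s,
      s.filter (fun z => condTypeClass x z = condTypeClass x y') = condTypeClass x y' := by
    intro y' hy'
    ext z
    rw [mem_filter, condTypeClass_eq_iff, and_iff_right_iff_imp]
    intro hz
    obtain ⟨σ, hx, rfl⟩ := exists_perm_of_mem_condTypeClass hz
    obtain ⟨hy'T, hy'd⟩ := mem_filter.1 hy'
    refine mem_filter.2 ⟨mem_typeClass.2 ?_, ?_⟩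
    · rw [count_comp_perm, mem_typeClass.1 hy'T]
    · rwa [← hx, dSeq_comp_perm]
  simp only [Astar, ← sum_filter]
  rw [admissibleClasses, ← sum_inv_card_fiber_eq_card_image, div_eq_inv_mul, mul_sum]
  refine sum_congr rfl fun y' hy' => ?_
  rw [hfiber y' hy', div_eq_mul_inv]

theorem card_admissibleClasses_le (d : B → B → ℝ) (Δ : ℝ) (x y : Fin n → B) :
    #(admissibleClasses d Δ x y) ≤ numCondTypes (dSeq d) Δ x :=
  card_le_card (image_subset_image (filter_subset_filter _ (subset_univ _)))

theorem one_le_card_admissibleClasses {d : B → B → ℝ} {Δ : ℝ} {x₀ y : Fin n → B}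
    (h : dSeq d x₀ y ≤ n * Δ) {x : Fin n → B} (hx : x ∈ typeClass x₀) :
    1 ≤ #(admissibleClasses d Δ x y) := by
  obtain ⟨σ, rfl⟩ := exists_perm_of_count_eq (mem_typeClass.1 hx)
  refine card_pos.2 ⟨condTypeClass (x₀ ∘ σ) (y ∘ σ), mem_image_of_mem _ (mem_filter.2
    ⟨mem_typeClass.2 (count_comp_perm y σ), ?_⟩)⟩
  rwa [dSeq_comp_perm]

theorem finite_setOf_klDiv (d : B → B → ℝ) (Δ : ℝ) (P : B → ℝ) (y : Fin n → B) :
    {v | ∃ x, dSeq d x y ≤ n * Δ ∧ v = klDiv (empP x) P}.Finite :=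
  (Set.finite_range fun x : Fin n → B => klDiv (empP x) P).subset
    (by rintro _ ⟨x, -, rfl⟩; exact ⟨x, rfl⟩)

theorem DtildeN_le (d : B → B → ℝ) (Δ : ℝ) (P : B → ℝ) {x y : Fin n → B}
    (h : dSeq d x y ≤ n * Δ) : DtildeN d Δ y P ≤ klDiv (empP x) P :=
  csInf_le (finite_setOf_klDiv d Δ P y).bddBelow ⟨x, h, rfl⟩

theorem exists_klDiv_eq_DtildeN (d : B → B → ℝ) (Δ : ℝ) (P : B → ℝ) {y : Fin n → B}
    (h : ∃ x, dSeq d x y ≤ n * Δ) :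
    ∃ x, dSeq d x y ≤ n * Δ ∧ klDiv (empP x) P = DtildeN d Δ y P := by
  obtain ⟨x, hx⟩ := h
  obtain ⟨x₀, hx₀, hD⟩ := Set.Nonempty.csInf_mem
    (s := {v | ∃ x, dSeq d x y ≤ n * Δ ∧ v = klDiv (empP x) P}) ⟨_, x, hx, rfl⟩
    (finite_setOf_klDiv d Δ P y)
  exact ⟨x₀, hx₀, hD.symm⟩

theorem seqProb_mul_card_admissibleClasses_div_le (d : B → B → ℝ) (Δ : ℝ) {P : B → ℝ}
    (hP : ∀ b, 0 < P b) (x y : Fin n → B) :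
    seqProb P x * (#(admissibleClasses d Δ x y) / numCondTypes (dSeq d) Δ x)
      ≤ exp (-n * DtildeN d Δ y P) / #(typeClass x) := by
  have hTx : (0 : ℝ) < #(typeClass x) := by exact_mod_cast card_typeClass_pos x
  obtain h | ⟨C, hC⟩ := (admissibleClasses d Δ x y).eq_empty_or_nonempty
  · rw [h, card_empty, Nat.cast_zero, zero_div, mul_zero]
    positivity
  obtain ⟨y', hy', -⟩ := mem_image.1 hC
  obtain ⟨hy'T, hy'd⟩ := mem_filter.1 hy'
  obtain ⟨σ, rfl⟩ := exists_perm_of_count_eq (mem_typeClass.1 hy'T)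
  have hD : DtildeN d Δ y P ≤ klDiv (empP x) P := by
    have hadm : dSeq d (x ∘ σ.symm) y ≤ n * Δ := by
      rwa [← dSeq_comp_perm d _ _ σ, Function.comp_assoc, Equiv.symm_comp_self,
        Function.comp_id]
    simpa [empP_comp_perm] using DtildeN_le d Δ P hadm
  have hKN : (#(admissibleClasses d Δ x y) : ℝ) / numCondTypes (dSeq d) Δ x ≤ 1 :=
    div_le_one_of_le₀ (by exact_mod_cast card_admissibleClasses_le d Δ x _) (by positivity)
  calc seqProb P x * (#(admissibleClasses d Δ x _) / numCondTypes (dSeq d) Δ x)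
      ≤ seqProb P x := mul_le_of_le_one_right (seqProb_nonneg (fun b => (hP b).le) _) hKN
    _ ≤ exp (-n * klDiv (empP x) P) / #(typeClass x) := by
        rw [le_div_iff₀ hTx, mul_comm]
        exact card_typeClass_mul_seqProb_le hP x
    _ ≤ exp (-n * DtildeN d Δ y P) / #(typeClass x) :=
        div_le_div_of_nonneg_right
          (exp_le_exp.2 (mul_le_mul_of_nonpos_left hD (by simp))) hTx.le

theorem inv_pow_le_card_admissibleClasses_div {d : B → B → ℝ} {Δ : ℝ} {x₀ y : Fin n → B}
    (h : dSeq d x₀ y ≤ n * Δ) {x : Fin n → B} (hx : x ∈ typeClass x₀) :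
    (((n : ℝ) + 1) ^ (Fintype.card B ^ 2))⁻¹
      ≤ #(admissibleClasses d Δ x y) / numCondTypes (dSeq d) Δ x := by
  have hK : (1 : ℝ) ≤ #(admissibleClasses d Δ x y) := by
    exact_mod_cast one_le_card_admissibleClasses h hx
  have hN : (1 : ℝ) ≤ numCondTypes (dSeq d) Δ x := by
    exact_mod_cast (one_le_card_admissibleClasses h hx).trans (card_admissibleClasses_le d Δ x y)
  calc (((n : ℝ) + 1) ^ (Fintype.card B ^ 2))⁻¹ ≤ (numCondTypes (dSeq d) Δ x : ℝ)⁻¹ :=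
        inv_anti₀ (by positivity) (by exact_mod_cast numCondTypes_le (dSeq d) Δ x)
    _ ≤ #(admissibleClasses d Δ x y) / numCondTypes (dSeq d) Δ x := by
        rw [inv_eq_one_div]
        exact div_le_div_of_nonneg_right hK (by positivity)

theorem card_typeClass_mul_outputProb_Astar_le (d : B → B → ℝ) (Δ : ℝ) {P : B → ℝ}
    (hP : ∀ b, 0 < P b) (y : Fin n → B) :
    #(typeClass y) * outputProb P (Astar (dSeq d) Δ) y
      ≤ (n + 1) ^ (Fintype.card B - 1) * exp (-n * DtildeN d Δ y P) := by
  rw [card_typeClass_mul_outputProb P (Astar_comp_perm d Δ)]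
  simp_rw [sum_Astar_typeClass]
  calc ∑ x, seqProb P x * (#(admissibleClasses d Δ x y) / numCondTypes (dSeq d) Δ x)
      ≤ ∑ x : Fin n → B, exp (-n * DtildeN d Δ y P) / #(typeClass x) :=
        sum_le_sum fun x _ => seqProb_mul_card_admissibleClasses_div_le d Δ hP x y
    _ = #(univ.image (count : (Fin n → B) → B → ℕ)) * exp (-n * DtildeN d Δ y P) := by
        simp_rw [div_eq_mul_inv, ← mul_sum, sum_inv_card_typeClass, mul_comm]
    _ ≤ (n + 1) ^ (Fintype.card B - 1) * exp (-n * DtildeN d Δ y P) := by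
        gcongr
        exact_mod_cast card_image_count_le

theorem exp_le_card_typeClass_mul_outputProb_Astar (d : B → B → ℝ) (Δ : ℝ) {P : B → ℝ}
    (hP : ∀ b, 0 < P b) {y : Fin n → B} (hy : ∃ x, dSeq d x y ≤ n * Δ) :
    exp (-n * DtildeN d Δ y P)
      ≤ (n + 1) ^ (Fintype.card B - 1) * (n + 1) ^ (Fintype.card B ^ 2)
        * (#(typeClass y) * outputProb P (Astar (dSeq d) Δ) y) := by
  obtain ⟨x₀, hx₀, hD⟩ := exists_klDiv_eq_DtildeN d Δ P hy
  rw [card_typeClass_mul_outputProb P (Astar_comp_perm d Δ)]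
  simp_rw [sum_Astar_typeClass]
  set C : ℝ := (n + 1) ^ (Fintype.card B ^ 2)
  have hC : C ≠ 0 := by positivity
  calc exp (-n * DtildeN d Δ y P)
      ≤ (n + 1) ^ (Fintype.card B - 1) * (#(typeClass x₀) * seqProb P x₀) :=
        hD ▸ exp_le_card_typeClass_mul_seqProb hP x₀
    _ = (n + 1) ^ (Fintype.card B - 1) * C * ∑ x ∈ typeClass x₀, seqProb P x * C⁻¹ := by
        rw [sum_congr rfl fun x hx => by rw [seqProb_eq_of_mem_typeClass P hx], sum_const,
          nsmul_eq_mul]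
        field_simp
    _ ≤ (n + 1) ^ (Fintype.card B - 1) * C
          * ∑ x ∈ typeClass x₀, seqProb P x
            * (#(admissibleClasses d Δ x y) / numCondTypes (dSeq d) Δ x) := by
        gcongr with x hx
        · exact seqProb_nonneg (fun b => (hP b).le) _
        · exact inv_pow_le_card_admissibleClasses_div hx₀ hx
    _ ≤ (n + 1) ^ (Fintype.card B - 1) * C
          * ∑ x, seqProb P x * (#(admissibleClasses d Δ x y) / numCondTypes (dSeq d) Δ x) := by
        refine mul_le_mul_of_nonneg_left (sum_le_sum_of_subset_of_nonneg (subset_univ _)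
          fun x _ _ => mul_nonneg (seqProb_nonneg (fun b => (hP b).le) x) ?_) (by positivity)
        exact div_nonneg (Nat.cast_nonneg _) (Nat.cast_nonneg _)

theorem exp_neg_mul_add (n : ℕ) (a b : ℝ) : exp (-n * (a + b)) = exp (-n * a) * exp (-n * b) := by
  rw [← exp_add, mul_add]

theorem outputProb_Astar_le (d : B → B → ℝ) (Δ : ℝ) {P : B → ℝ} (hP : ∀ b, 0 < P b)
    (y : Fin n → B) :
    outputProb P (Astar (dSeq d) Δ) y
      ≤ (n + 1) ^ (2 * (Fintype.card B - 1)) * exp (-n * (empEnt y + DtildeN d Δ y P)) := by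
  have hQ := outputProb_nonneg (fun b => (hP b).le) (Astar_nonneg d Δ) y
  calc outputProb P (Astar (dSeq d) Δ) y
      ≤ (n + 1) ^ (Fintype.card B - 1) * (#(typeClass y) * exp (-n * empEnt y))
          * outputProb P (Astar (dSeq d) Δ) y :=
        le_mul_of_one_le_left hQ (one_le_card_typeClass_mul_exp y)
    _ = (n + 1) ^ (Fintype.card B - 1) * exp (-n * empEnt y)
          * (#(typeClass y) * outputProb P (Astar (dSeq d) Δ) y) := by ring
    _ ≤ (n + 1) ^ (Fintype.card B - 1) * exp (-n * empEnt y)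
          * ((n + 1) ^ (Fintype.card B - 1) * exp (-n * DtildeN d Δ y P)) :=
        mul_le_mul_of_nonneg_left (card_typeClass_mul_outputProb_Astar_le d Δ hP y)
          (by positivity)
    _ = _ := by rw [exp_neg_mul_add, two_mul, pow_add]; ring

theorem exp_div_le_outputProb_Astar (d : B → B → ℝ) (Δ : ℝ) {P : B → ℝ} (hP : ∀ b, 0 < P b)
    {y : Fin n → B} (hy : ∃ x, dSeq d x y ≤ n * Δ) :
    exp (-n * (empEnt y + DtildeN d Δ y P)) / (n + 1) ^ (Fintype.card B - 1 + Fintype.card B ^ 2)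
      ≤ outputProb P (Astar (dSeq d) Δ) y := by
  rw [div_le_iff₀ (by positivity), exp_neg_mul_add]
  calc exp (-n * empEnt y) * exp (-n * DtildeN d Δ y P)
      ≤ exp (-n * empEnt y) * ((n + 1) ^ (Fintype.card B - 1) * (n + 1) ^ (Fintype.card B ^ 2)
          * (#(typeClass y) * outputProb P (Astar (dSeq d) Δ) y)) := by
        gcongr
        exact exp_le_card_typeClass_mul_outputProb_Astar d Δ hP hy
    _ = #(typeClass y) * exp (-n * empEnt y) * ((n + 1) ^ (Fintype.card B - 1 + Fintype.card B ^ 2)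
          * outputProb P (Astar (dSeq d) Δ) y) := by ring
    _ ≤ outputProb P (Astar (dSeq d) Δ) y
          * (n + 1) ^ (Fintype.card B - 1 + Fintype.card B ^ 2) := by
        rw [mul_comm (outputProb _ _ _)]
        exact mul_le_of_le_one_left
          (mul_nonneg (by positivity) (outputProb_nonneg (fun b => (hP b).le) (Astar_nonneg d Δ) y))
          (card_typeClass_mul_exp_le_one y)

end MethodOfTypes

open MethodOfTypes

theorem qstar_exponential_bounds_general
    {A : Type} [Fintype A] [DecidableEq A]
    (d : A → A → ℝ) (hdrefl : ∀ a, d a a = 0)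
    (P : A → ℝ) (hPpos : ∀ a, 0 < P a)
    (Δ : ℝ) (hΔ : 0 ≤ Δ) {n : ℕ} :
    ∀ y : Fin n → A,
      Real.exp (-(n : ℝ) * (empEnt y + DtildeN d Δ y P)) /
          ((n : ℝ) + 1) ^ (2 * Fintype.card A ^ 2)
        ≤ ∑ x : Fin n → A, seqProb P x * Astar (dSeq d) Δ x y ∧
      ∑ x : Fin n → A, seqProb P x * Astar (dSeq d) Δ x y
        ≤ ((n : ℝ) + 1) ^ (Fintype.card A ^ 2) *
            Real.exp (-(n : ℝ) * (empEnt y + DtildeN d Δ y P)) := by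
  intro y
  have hy : dSeq d y y ≤ n * Δ := by
    simp only [dSeq, hdrefl, sum_const_zero]
    positivity
  have hn1 : (1 : ℝ) ≤ n + 1 := by linarith [(n.cast_nonneg : (0 : ℝ) ≤ n)]
  have hk : Fintype.card A - 1 + Fintype.card A ^ 2 ≤ 2 * Fintype.card A ^ 2
      ∧ 2 * (Fintype.card A - 1) ≤ Fintype.card A ^ 2 := by
    rcases Nat.eq_zero_or_pos (Fintype.card A) with h | h
    · simp [h]
    · constructor <;> nlinarith [Nat.sub_add_cancel h]
  refine ⟨le_trans ?_ (exp_div_le_outputProb_Astar d Δ hPpos ⟨y, hy⟩),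
    (outputProb_Astar_le d Δ hPpos y).trans ?_⟩
  · exact div_le_div_of_nonneg_left (Real.exp_pos _).le (by positivity)
      (pow_le_pow_right₀ hn1 hk.1)
  · exact mul_le_mul_of_nonneg_right (pow_le_pow_right₀ hn1 hk.2) (Real.exp_pos _).le

/-- exponential characterization of the output distribution induced by
the optimum attack channel `A*_Δ`. -/
theorem qstar_exponential_bounds
    {A : Type} [Fintype A] [DecidableEq A] [Nonempty A]
    (d : A → A → ℝ) (hd : ∀ a b, 0 ≤ d a b) (hdrefl : ∀ a, d a a = 0)
    (P : A → ℝ) (hP : IsPMF P) (hPpos : ∀ a, 0 < P a)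
    (Δ : ℝ) (hΔ : 0 ≤ Δ) {n : ℕ} (hn : 1 ≤ n) :
    ∀ y : Fin n → A,
      Real.exp (-(n : ℝ) * (empEnt y + DtildeN d Δ y P)) /
          ((n : ℝ) + 1) ^ (2 * Fintype.card A ^ 2)
        ≤ ∑ x : Fin n → A, seqProb P x * Astar (dSeq d) Δ x y ∧
      ∑ x : Fin n → A, seqProb P x * Astar (dSeq d) Δ x y
        ≤ ((n : ℝ) + 1) ^ (Fintype.card A ^ 2) *
            Real.exp (-(n : ℝ) * (empEnt y + DtildeN d Δ y P)) :=
  qstar_exponential_bounds_general d hdrefl P hPpos Δ hΔ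
end
end
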